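/- arXiv:1802.04477 — 3 statements merged into one kernel-verified Lean document; each statement's English description precedes it below -/
import Mathlib

section
/- Let h : ℝᵈ → ℝ be convex, η > 0, x, v, w ∈ ℝᵈ, and set x⁺ = prox_{ηh}(x - ηv), x̄ = prox_{ηh}(x - ηw). Then ⟨w - v, x⁺ - x̄⟩ ≤ η‖w - v‖². -/
open scoped RealInnerProductSpace

set_option maxHeartbeats 1600000 in
theorem prox_inner_bound {d : ℕ} (h : EuclideanSpace ℝ (Fin d) → ℝ)
    (hconv : ConvexOn ℝ Set.univ h)
    (η : ℝ) (hη : 0 < η) (x v w xplus xbar : EuclideanSpace ℝ (Fin d))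
    (hminv : ∀ y : EuclideanSpace ℝ (Fin d),
      h xplus + (1 / (2 * η)) * ‖xplus - (x - η • v)‖ ^ 2 ≤
        h y + (1 / (2 * η)) * ‖y - (x - η • v)‖ ^ 2)
    (hminw : ∀ y : EuclideanSpace ℝ (Fin d),
      h xbar + (1 / (2 * η)) * ‖xbar - (x - η • w)‖ ^ 2 ≤
        h y + (1 / (2 * η)) * ‖y - (x - η • w)‖ ^ 2) :
    ⟪w - v, xplus - xbar⟫ ≤ η * ‖w - v‖ ^ 2 := by
  set a : EuclideanSpace ℝ (Fin d) := x - η • v with ha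
  set b : EuclideanSpace ℝ (Fin d) := x - η • w with hb
  set p : EuclideanSpace ℝ (Fin d) := xplus
  set q : EuclideanSpace ℝ (Fin d) := xbar
  have hc : (0:ℝ) < 1 / (2 * η) := by positivity
  set c : ℝ := 1 / (2 * η) with hcdef
  -- expansion lemma
  have expand : ∀ (u z : EuclideanSpace ℝ (Fin d)) (t : ℝ),
      ‖u + t • z‖ ^ 2 = ‖u‖ ^ 2 + 2 * t * ⟪u, z⟫ + t ^ 2 * ‖z‖ ^ 2 := by
    intro u z t
    rw [norm_add_sq_real, real_inner_smul_right, norm_smul, Real.norm_eq_abs, mul_pow, sq_abs]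
    ring
  -- key inequality for each t ∈ (0,1]
  have key : ∀ t : ℝ, 0 < t → t ≤ 1 →
      (1 - t) * ‖p - q‖ ^ 2 ≤ ⟪a - b, p - q⟫ := by
    intro t ht ht1
    have yt : EuclideanSpace ℝ (Fin d) := p + t • (q - p)
    have hyt : p + t • (q - p) = (1 - t) • p + t • q := by module
    have hzt : q + t • (p - q) = (1 - t) • q + t • p := by module
    have hconv1 : h (p + t • (q - p)) ≤ (1 - t) * h p + t * h q := by
      rw [hyt]
      exact hconv.2 (Set.mem_univ p) (Set.mem_univ q) (by linarith) (le_of_lt ht) (by ring)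
    have hconv2 : h (q + t • (p - q)) ≤ (1 - t) * h q + t * h p := by
      rw [hzt]
      exact hconv.2 (Set.mem_univ q) (Set.mem_univ p) (by linarith) (le_of_lt ht) (by ring)
    have e1 : p + t • (q - p) - a = (p - a) + t • (q - p) := by module
    have e2 : q + t • (p - q) - b = (q - b) + t • (p - q) := by module
    have h1 := hminv (p + t • (q - p))
    have h2 := hminw (q + t • (p - q))
    rw [e1, expand] at h1
    rw [e2, expand] at h2
    -- combine
    have hnn : ‖q - p‖ = ‖p - q‖ := by rw [← norm_neg]; congr 1; module
    rw [hnn] at h1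
    have hA : t * (h p - h q) ≤ c * (2 * t * ⟪p - a, q - p⟫ + t ^ 2 * ‖p - q‖ ^ 2) := by
      nlinarith [h1, hconv1]
    have hB : t * (h q - h p) ≤ c * (2 * t * ⟪q - b, p - q⟫ + t ^ 2 * ‖p - q‖ ^ 2) := by
      nlinarith [h2, hconv2]
    have h2ct : (0:ℝ) < 2 * c * t := by positivity
    have h0 : 0 ≤ 2 * c * t * (⟪p - a, q - p⟫ + ⟪q - b, p - q⟫ + t * ‖p - q‖ ^ 2) := by
      linarith [hA, hB]
    have hsum : 0 ≤ ⟪p - a, q - p⟫ + ⟪q - b, p - q⟫ + t * ‖p - q‖ ^ 2 := by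
      have hd := div_nonneg h0 h2ct.le
      rwa [mul_div_cancel_left₀ _ (ne_of_gt h2ct)] at hd
    have hrw : ⟪p - a, q - p⟫ + ⟪q - b, p - q⟫
        = ⟪a - b, p - q⟫ - ‖p - q‖ ^ 2 := by
      have A1 : ⟪p - a, q - p⟫ = ⟪a - p, p - q⟫ := by
        rw [← inner_neg_neg]; congr 1 <;> module
      have step : ⟪p - a, q - p⟫ + ⟪q - b, p - q⟫ = ⟪(a - b) - (p - q), p - q⟫ := by
        rw [A1, ← inner_add_left]; congr 1; module
      rw [step, inner_sub_left, real_inner_self_eq_norm_sq]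
    rw [hrw] at hsum
    linarith
  -- pass to the limit t → 0
  have firm : ‖p - q‖ ^ 2 ≤ ⟪a - b, p - q⟫ := by
    refine le_of_forall_pos_le_add ?_
    intro ε hε
    set t : ℝ := min 1 (ε / (‖p - q‖ ^ 2 + 1)) with htdef
    have ht0 : 0 < t := lt_min one_pos (by positivity)
    have ht1 : t ≤ 1 := min_le_left _ _
    have hk := key t ht0 ht1
    have htb : t * ‖p - q‖ ^ 2 ≤ ε := by
      have h1 : t ≤ ε / (‖p - q‖ ^ 2 + 1) := min_le_right _ _
      have h2 : t * ‖p - q‖ ^ 2 ≤ (ε / (‖p - q‖ ^ 2 + 1)) * (‖p - q‖ ^ 2 + 1) := by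
        apply mul_le_mul h1 (by linarith) (by positivity) (by positivity)
      rw [div_mul_cancel₀] at h2
      · exact h2
      · positivity
    nlinarith [hk, htb]
  -- a - b = η • (w - v)
  have hab : a - b = η • (w - v) := by rw [ha, hb]; module
  have firm' : ‖p - q‖ ^ 2 ≤ η * ⟪w - v, p - q⟫ := by
    rw [hab, real_inner_smul_left] at firm
    exact firm
  have cauchy : ⟪w - v, p - q⟫ ≤ ‖w - v‖ * ‖p - q‖ := real_inner_le_norm _ _
  nlinarith [firm', cauchy, norm_nonneg (p - q), norm_nonneg (w - v), sq_nonneg (‖p - q‖ - η * ‖w - v‖)]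
end

section
/- Let f : ℝᵈ → ℝ be differentiable with L-Lipschitz gradient, h : ℝᵈ → ℝ convex, Φ = f + h, η > 0, and v ∈ ℝᵈ. Let x⁺ = prox_{ηh}(x - ηv). Then for every z ∈ ℝᵈ: Φ(x⁺) ≤ Φ(z) + ⟨∇f(x) - v, x⁺ - z⟩ - (1/η)⟨x⁺ - x, x⁺ - z⟩ + (L/2)‖x⁺ - x‖² + (L/2)‖z - x‖². -/
/-! Smoothness of `f` bounds `f x⁺` from above and `f z` from below by the linearization of `f`
at `x`, up to `(L/2)‖· - x‖²`. Minimality of `x⁺` for the prox objective makes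
`(x - ηv - x⁺)/η` a subgradient of `h` at `x⁺` (compare with the points `x⁺ + t(z - x⁺)` and let
`t → 0⁺`), which bounds `h x⁺` by `h z` plus a linear term. Adding the three bounds gives the
claim. -/

open scoped RealInnerProductSpace
open Set Filter Topology

theorem norm_sub_sub_fderiv_apply_le_of_lipschitz {E F : Type*}
    [NormedAddCommGroup E] [NormedSpace ℝ E] [NormedAddCommGroup F] [NormedSpace ℝ F]
    {f : E → F} {f' : E → E →L[ℝ] F} {L : ℝ} (hf : ∀ x, HasFDerivAt f (f' x) x)
    (hf' : ∀ x y, ‖f' x - f' y‖ ≤ L * ‖x - y‖) (x y : E) :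
    ‖f y - f x - f' x (y - x)‖ ≤ L / 2 * ‖y - x‖ ^ 2 := by
  set u := y - x
  have hderiv : ∀ t : ℝ, HasDerivAt (fun t : ℝ => f (x + t • u) - f x - t • f' x u)
      (f' (x + t • u) u - f' x u) t := by
    intro t
    have hline : HasDerivAt (fun t : ℝ => x + t • u) u t := by
      simpa using ((hasDerivAt_id t).smul_const u).const_add x
    simpa using (((hf _).comp_hasDerivAt t hline).sub_const (f x)).fun_sub
      ((hasDerivAt_id t).smul_const (f' x u))
  have hbound : ∀ t ∈ Ico (0 : ℝ) 1, ‖f' (x + t • u) u - f' x u‖ ≤ L * t * ‖u‖ ^ 2 := by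
    intro t ht
    calc ‖f' (x + t • u) u - f' x u‖ = ‖(f' (x + t • u) - f' x) u‖ := rfl
      _ ≤ ‖f' (x + t • u) - f' x‖ * ‖u‖ := ContinuousLinearMap.le_opNorm _ _
      _ ≤ L * ‖t • u‖ * ‖u‖ := by
          gcongr
          simpa using hf' (x + t • u) x
      _ = L * t * ‖u‖ ^ 2 := by rw [norm_smul, Real.norm_of_nonneg ht.1]; ring
  have hboundary (t : ℝ) : HasDerivAt (fun t : ℝ => L / 2 * t ^ 2 * ‖u‖ ^ 2) (L * t * ‖u‖ ^ 2) t :=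
    (((hasDerivAt_pow 2 t).const_mul (L / 2)).mul_const _).congr_deriv (by push_cast; ring)
  simpa [u] using image_norm_le_of_norm_deriv_right_le_deriv_boundary
    (fun t _ => (hderiv t).continuousAt.continuousWithinAt)
    (fun t _ => (hderiv t).hasDerivWithinAt) (by simp) hboundary hbound (right_mem_Icc.2 zero_le_one)

theorem abs_sub_sub_inner_le_of_lipschitz_gradient {E : Type*}
    [NormedAddCommGroup E] [InnerProductSpace ℝ E] [CompleteSpace E]
    {f : E → ℝ} {f' : E → E} {L : ℝ} (hf : ∀ x, HasGradientAt f (f' x) x)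
    (hf' : ∀ x y, ‖f' x - f' y‖ ≤ L * ‖x - y‖) (x y : E) :
    |f y - f x - ⟪f' x, y - x⟫| ≤ L / 2 * ‖y - x‖ ^ 2 := by
  refine norm_sub_sub_fderiv_apply_le_of_lipschitz
    (f' := fun x => InnerProductSpace.toDual ℝ E (f' x)) hf (fun x y => ?_) x y
  simpa [← map_sub] using hf' x y

theorem ConvexOn.le_add_inner_of_isMinOn_add_norm_sub_sq {E : Type*}
    [NormedAddCommGroup E] [InnerProductSpace ℝ E] {s : Set E} {h : E → ℝ}
    (hh : ConvexOn ℝ s h) {c : ℝ} {u p z : E} (hp : p ∈ s) (hz : z ∈ s)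
    (hmin : IsMinOn (fun y => h y + c * ‖y - u‖ ^ 2) s p) :
    h p ≤ h z + 2 * c * ⟪p - u, z - p⟫ := by
  have hsegment : ∀ t ∈ Ioc (0 : ℝ) 1,
      h p ≤ h z + 2 * c * ⟪p - u, z - p⟫ + t * (c * ‖z - p‖ ^ 2) := by
    rintro t ⟨ht₀, ht₁⟩
    have hmem : p + t • (z - p) ∈ s := hh.1.add_smul_sub_mem hp hz ⟨ht₀.le, ht₁⟩
    have hconv : h (p + t • (z - p)) ≤ (1 - t) * h p + t * h z := by
      have := hh.2 hp hz (sub_nonneg.2 ht₁) ht₀.le (sub_add_cancel 1 t)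
      rwa [show (1 - t) • p + t • z = p + t • (z - p) by module] at this
    have hnorm : ‖p + t • (z - p) - u‖ ^ 2 =
        ‖p - u‖ ^ 2 + 2 * t * ⟪p - u, z - p⟫ + t ^ 2 * ‖z - p‖ ^ 2 := by
      rw [add_sub_right_comm, norm_add_sq_real, real_inner_smul_right, norm_smul, mul_pow,
        Real.norm_eq_abs, sq_abs]
      ring
    have hcompare := isMinOn_iff.1 hmin _ hmem
    simp only [hnorm] at hcompare
    refine le_of_mul_le_mul_left ?_ ht₀
    linarith
  have hlim : Tendsto (fun t : ℝ => h z + 2 * c * ⟪p - u, z - p⟫ + t * (c * ‖z - p‖ ^ 2))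
      (𝓝[>] 0) (𝓝 (h z + 2 * c * ⟪p - u, z - p⟫)) :=
    tendsto_nhdsWithin_of_tendsto_nhds (by
      simpa using ((continuous_id.mul continuous_const).const_add _).tendsto (0 : ℝ))
  exact ge_of_tendsto hlim (eventually_of_mem (Ioc_mem_nhdsGT one_pos) hsegment)

theorem key_prox_descent_lemma {d : ℕ}
    (f h : EuclideanSpace ℝ (Fin d) → ℝ)
    (f' : EuclideanSpace ℝ (Fin d) → EuclideanSpace ℝ (Fin d)) (L : ℝ)
    (hdiff : ∀ x, HasGradientAt f (f' x) x)
    (hLip : ∀ x y, ‖f' x - f' y‖ ≤ L * ‖x - y‖)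
    (hconv : ConvexOn ℝ Set.univ h)
    (η : ℝ) (hη : 0 < η) (x v xplus : EuclideanSpace ℝ (Fin d))
    (hmin : ∀ y : EuclideanSpace ℝ (Fin d),
      h xplus + (1 / (2 * η)) * ‖xplus - (x - η • v)‖ ^ 2 ≤
        h y + (1 / (2 * η)) * ‖y - (x - η • v)‖ ^ 2) :
    ∀ z : EuclideanSpace ℝ (Fin d),
      f xplus + h xplus ≤ f z + h z + ⟪f' x - v, xplus - z⟫
        - (1 / η) * ⟪xplus - x, xplus - z⟫
        + (L / 2) * ‖xplus - x‖ ^ 2 + (L / 2) * ‖z - x‖ ^ 2 := by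
  intro z
  have hupper := (abs_le.1 (abs_sub_sub_inner_le_of_lipschitz_gradient hdiff hLip x xplus)).2
  have hlower := (abs_le.1 (abs_sub_sub_inner_le_of_lipschitz_gradient hdiff hLip x z)).1
  have hprox := hconv.le_add_inner_of_isMinOn_add_norm_sub_sq (mem_univ xplus) (mem_univ z)
    (isMinOn_univ_iff.2 hmin)
  have hsplit : 2 * (1 / (2 * η)) * ⟪xplus - (x - η • v), z - xplus⟫ =
      (1 / η) * ⟪xplus - x, z - xplus⟫ + ⟪v, z - xplus⟫ := by
    rw [sub_sub_eq_add_sub, add_sub_right_comm, inner_add_left, real_inner_smul_left]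
    field_simp
  have hswap : ∀ a : EuclideanSpace ℝ (Fin d), ⟪a, z - xplus⟫ = -⟪a, xplus - z⟫ := fun a => by
    rw [← inner_neg_right, neg_sub]
  have hgrad : ⟪f' x, xplus - x⟫ - ⟪f' x, z - x⟫ = ⟪f' x, xplus - z⟫ := by
    rw [← inner_sub_right, sub_sub_sub_cancel_right]
  rw [hsplit, hswap, hswap] at hprox
  rw [inner_sub_left]
  linarith
end

section
/- Let f₁, …, f_n : ℝᵈ → ℝ each have L-Lipschitz gradient, f = (1/n)Σᵢ fᵢ, and fix x, x̃ ∈ ℝᵈ. Let i₁, …, i_b be i.i.d. uniform on {1,…,n} and define v = (1/b)Σ_{j=1}^b (∇f_{i_j}(x) - ∇f_{i_j}(x̃)) + ∇f(x̃). Then E[v] = ∇f(x) and E[‖v - ∇f(x)‖²] ≤ (L²/b)·‖x - x̃‖². -/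
/-!
Write `Zᵢ = ∇fᵢ(x) - ∇fᵢ(x̃)` and `m = ∇f(x) - ∇f(x̃)` for their mean. Then `v - ∇f(x)` is the
average of the `b` i.i.d. mean-zero draws `Yⱼ = Z_{iⱼ} - m`, which is already the first claim.
Distinct draws are independent, hence uncorrelated, so `E‖∑ Yⱼ‖² = b E‖Y₁‖²`; finally
`E‖Y₁‖² ≤ E‖Z_{i₁}‖² ≤ L² ‖x - x̃‖²` since variance is at most the second moment.
-/

open Finset

section UniformSampling

variable {α ι : Type*} [Fintype α] [DecidableEq α] [Fintype ι]

theorem Fintype.sum_pi_apply {M : Type*} [AddCommMonoid M] (f : ι → M) (j : α) :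
    ∑ ω : α → ι, f (ω j) = Fintype.card ι ^ (Fintype.card α - 1) • ∑ i, f i := by
  simpa [Fintype.piFinset_univ] using Fintype.sum_piFinset_apply f univ j

variable {E : Type*} [NormedAddCommGroup E] [InnerProductSpace ℝ E]

theorem sum_pi_inner_apply_eq_zero_of_ne {Y : ι → E} (hY : ∑ i, Y i = 0) {j k : α}
    (hjk : j ≠ k) : ∑ ω : α → ι, inner ℝ (Y (ω j)) (Y (ω k)) = 0 := by
  have hkj : k ≠ j := hjk.symm
  rw [← (Equiv.funSplitAt j ι).symm.sum_comp, Fintype.sum_prod_type]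
  refine sum_eq_zero fun i _ => ?_
  simp only [Equiv.funSplitAt_symm_apply, dif_pos, dif_neg hkj]
  rw [← inner_sum, Fintype.sum_pi_apply Y (⟨k, hkj⟩ : {l // l ≠ j}), hY, smul_zero,
    inner_zero_right]

theorem sum_pi_norm_sum_apply_sq {Y : ι → E} (hY : ∑ i, Y i = 0) :
    ∑ ω : α → ι, ‖∑ j, Y (ω j)‖ ^ 2 =
      Fintype.card α * Fintype.card ι ^ (Fintype.card α - 1) * ∑ i, ‖Y i‖ ^ 2 := by
  have hdiag (j : α) : ∑ ω : α → ι, inner ℝ (Y (ω j)) (Y (ω j)) =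
      Fintype.card ι ^ (Fintype.card α - 1) * ∑ i, ‖Y i‖ ^ 2 := by
    simp only [real_inner_self_eq_norm_sq]
    rw [Fintype.sum_pi_apply (fun i => ‖Y i‖ ^ 2), nsmul_eq_mul, Nat.cast_pow]
  calc ∑ ω : α → ι, ‖∑ j, Y (ω j)‖ ^ 2
      = ∑ j, ∑ k, ∑ ω : α → ι, inner ℝ (Y (ω j)) (Y (ω k)) := by
        simp only [← real_inner_self_eq_norm_sq, sum_inner]
        simp only [inner_sum]
        rw [sum_comm]
        exact sum_congr rfl fun j _ => sum_comm
    _ = ∑ j : α, ∑ ω : α → ι, inner ℝ (Y (ω j)) (Y (ω j)) :=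
        sum_congr rfl fun j _ => sum_eq_single j
          (fun k _ hkj => sum_pi_inner_apply_eq_zero_of_ne hY (Ne.symm hkj)) (by simp)
    _ = _ := by simp only [hdiag, sum_const, card_univ, nsmul_eq_mul, mul_assoc]

end UniformSampling

section Mean

variable {ι E : Type*} [Fintype ι] [NormedAddCommGroup E] [InnerProductSpace ℝ E]

theorem sum_eq_card_smul_mean (Z : ι → E) :
    ∑ i, Z i = (Fintype.card ι : ℝ) • ((Fintype.card ι : ℝ)⁻¹ • ∑ i, Z i) := by
  rcases eq_or_ne (Fintype.card ι : ℝ) 0 with h | h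
  · have : IsEmpty ι := Fintype.card_eq_zero_iff.mp (by exact_mod_cast h)
    simp
  · rw [smul_inv_smul₀ h]

theorem sum_sub_mean_eq_zero (Z : ι → E) :
    ∑ i, (Z i - (Fintype.card ι : ℝ)⁻¹ • ∑ i, Z i) = 0 := by
  rw [sum_sub_distrib, sum_const, card_univ, ← Nat.cast_smul_eq_nsmul ℝ,
    ← sum_eq_card_smul_mean, sub_self]

theorem sum_norm_sub_mean_sq_le (Z : ι → E) :
    ∑ i, ‖Z i - (Fintype.card ι : ℝ)⁻¹ • ∑ i, Z i‖ ^ 2 ≤ ∑ i, ‖Z i‖ ^ 2 := by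
  set m := (Fintype.card ι : ℝ)⁻¹ • ∑ i, Z i
  have hcross : ∑ i, inner ℝ (Z i) m = Fintype.card ι * ‖m‖ ^ 2 := by
    rw [← sum_inner, sum_eq_card_smul_mean, real_inner_smul_left, real_inner_self_eq_norm_sq]
  simp only [norm_sub_sq_real, sum_add_distrib, sum_sub_distrib, ← mul_sum, hcross, sum_const,
    card_univ, nsmul_eq_mul]
  nlinarith [sq_nonneg ‖m‖, (Fintype.card ι).cast_nonneg (α := ℝ)]

end Mean

theorem minibatch_svrg_variance_general {d n b : ℕ} (hn : 0 < n) (hb : 0 < b)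
    (g : Fin n → EuclideanSpace ℝ (Fin d) → EuclideanSpace ℝ (Fin d)) (L : ℝ)
    (hLip : ∀ i x y, ‖g i x - g i y‖ ≤ L * ‖x - y‖)
    (x xt : EuclideanSpace ℝ (Fin d))
    (gbar : EuclideanSpace ℝ (Fin d) → EuclideanSpace ℝ (Fin d))
    (hgbar : ∀ u, gbar u = (n : ℝ)⁻¹ • ∑ i, g i u)
    (v : (Fin b → Fin n) → EuclideanSpace ℝ (Fin d))
    (hv : ∀ ι : Fin b → Fin n,
      v ι = (b : ℝ)⁻¹ • ∑ j, (g (ι j) x - g (ι j) xt) + gbar xt) :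
    (((n : ℝ) ^ b)⁻¹ • ∑ ι : Fin b → Fin n, v ι) = gbar x ∧
      ((n : ℝ) ^ b)⁻¹ * ∑ ι : Fin b → Fin n, ‖v ι - gbar x‖ ^ 2 ≤
        (L ^ 2 / b) * ‖x - xt‖ ^ 2 := by
  have hn' : (n : ℝ) ≠ 0 := by positivity
  have hb' : (b : ℝ) ≠ 0 := by positivity
  set Z : Fin n → EuclideanSpace ℝ (Fin d) := fun i => g i x - g i xt
  set Y : Fin n → EuclideanSpace ℝ (Fin d) := fun i => Z i - (n : ℝ)⁻¹ • ∑ i, Z i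
  have hY : ∑ i, Y i = 0 := by simpa only [Fintype.card_fin] using sum_sub_mean_eq_zero Z
  have hmean : gbar x - gbar xt = (n : ℝ)⁻¹ • ∑ i, Z i := by
    simp only [hgbar, Z, sum_sub_distrib, smul_sub]
  have hcentered (ω : Fin b → Fin n) : v ω - gbar x = (b : ℝ)⁻¹ • ∑ j, Y (ω j) := by
    have hsumY : ∑ j, Y (ω j) = ∑ j, Z (ω j) - (b : ℝ) • (gbar x - gbar xt) := by
      rw [hmean, sum_sub_distrib, sum_const, card_univ, Fintype.card_fin, Nat.cast_smul_eq_nsmul]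
    rw [hsumY, smul_sub, inv_smul_smul₀ hb', hv]
    abel
  have hYZ : ∑ i, ‖Y i‖ ^ 2 ≤ n * (L * ‖x - xt‖) ^ 2 := by
    refine (Fintype.card_fin n ▸ sum_norm_sub_mean_sq_le Z).trans ?_
    simpa using sum_le_card_nsmul univ (fun i => ‖Z i‖ ^ 2) _ fun i _ =>
      pow_le_pow_left₀ (norm_nonneg _) (hLip i x xt) 2
  constructor
  · have hsum : ∑ ω, (v ω - gbar x) = 0 := by
      simp only [hcentered, ← smul_sum]
      rw [sum_comm]
      simp [Fintype.sum_pi_apply, hY]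
    rw [sum_sub_distrib, sum_const, card_univ, Fintype.card_fun, Fintype.card_fin,
      Fintype.card_fin, sub_eq_zero] at hsum
    rw [hsum, ← Nat.cast_smul_eq_nsmul ℝ, Nat.cast_pow, inv_smul_smul₀ (pow_ne_zero _ hn')]
  · calc ((n : ℝ) ^ b)⁻¹ * ∑ ω : Fin b → Fin n, ‖v ω - gbar x‖ ^ 2
        = ((n : ℝ) ^ b)⁻¹ * ((b : ℝ)⁻¹ ^ 2 * ∑ ω : Fin b → Fin n, ‖∑ j, Y (ω j)‖ ^ 2) := by
          simp only [hcentered, norm_smul, mul_pow, ← mul_sum, norm_inv, Real.norm_natCast]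
      _ = ((b : ℝ) * n)⁻¹ * ∑ i, ‖Y i‖ ^ 2 := by
          rw [sum_pi_norm_sum_apply_sq hY, Fintype.card_fin, Fintype.card_fin,
            ← pow_sub_one_mul hb.ne' (n : ℝ)]
          field_simp
      _ ≤ ((b : ℝ) * n)⁻¹ * (n * (L * ‖x - xt‖) ^ 2) := by gcongr
      _ = L ^ 2 / b * ‖x - xt‖ ^ 2 := by field_simp

theorem minibatch_svrg_variance {d n b : ℕ} (hn : 0 < n) (hb : 0 < b)
    (f : Fin n → EuclideanSpace ℝ (Fin d) → ℝ)
    (g : Fin n → EuclideanSpace ℝ (Fin d) → EuclideanSpace ℝ (Fin d)) (L : ℝ)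
    (hdiff : ∀ i x, HasGradientAt (f i) (g i x) x)
    (hLip : ∀ i x y, ‖g i x - g i y‖ ≤ L * ‖x - y‖)
    (x xt : EuclideanSpace ℝ (Fin d))
    (gbar : EuclideanSpace ℝ (Fin d) → EuclideanSpace ℝ (Fin d))
    (hgbar : ∀ u, gbar u = (n : ℝ)⁻¹ • ∑ i, g i u)
    (v : (Fin b → Fin n) → EuclideanSpace ℝ (Fin d))
    (hv : ∀ ι : Fin b → Fin n,
      v ι = (b : ℝ)⁻¹ • ∑ j, (g (ι j) x - g (ι j) xt) + gbar xt) :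
    (((n : ℝ) ^ b)⁻¹ • ∑ ι : Fin b → Fin n, v ι) = gbar x ∧
      ((n : ℝ) ^ b)⁻¹ * ∑ ι : Fin b → Fin n, ‖v ι - gbar x‖ ^ 2 ≤
        (L ^ 2 / b) * ‖x - xt‖ ^ 2 :=
  minibatch_svrg_variance_general hn hb g L hLip x xt gbar hgbar v hv
end
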